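/- Let Ω ⊆ ℝ^d be open, K ⊆ Ω compact, (x_{0,ε}) a net of points of K, and (u_ε) a moderate net of smooth functions on Ω. Then the following are equivalent: (1) there exists a slow scale infinitesimal net (r_ε) of positive reals such that for every moderate net (x_ε) for which there is a negligible net (n_ε) with |x_ε − x_{0,ε}| ≤ r_ε + n_ε for small ε, there exists N ∈ ℕ such that for every multi-index α there is a negligible net (n^{(α)}_ε) with |∂^α u_ε(x_ε)| ≤ ε^{−N} + n^{(α)}_ε for small ε; (2) there exists N ∈ ℕ such that for every multi-index α and every moderate net (x_ε) with (x_ε − x_{0,ε}) a fast scale infinitesimal, there is a negligible net (n^{(α)}_ε) with |∂^α u_ε(x_ε)| ≤ ε^{−N} + n^{(α)}_ε for small ε; (3) there exists N ∈ ℕ such that for every integer m ≥ 1 and every multi-index α, sup over {x : |x − x_{0,ε}| ≤ ε^{1/m}} of |∂^α u_ε(x)| ≤ ε^{−N} for small ε. -/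

import Mathlib

open MeasureTheory Set Metric
open scoped RealInnerProductSpace

noncomputable section

/-- Euclidean space `ℝ^d`. -/
abbrev Eu (d : ℕ) : Type := EuclideanSpace ℝ (Fin d)

/-- A property of `ε` holds "for small ε", i.e. on some interval `(0, ε₀]`. -/
def SmallE (P : ℝ → Prop) : Prop :=
  ∃ ε₀ : ℝ, 0 < ε₀ ∧ ∀ ε : ℝ, 0 < ε → ε ≤ ε₀ → P ε

/-- A net in a normed space is moderate. -/
def ModNet {V : Type*} [NormedAddCommGroup V] (x : ℝ → V) : Prop :=
  ∃ N : ℕ, SmallE fun ε => ‖x ε‖ ≤ ε ^ (-(N : ℝ))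

/-- A net in a normed space is negligible. -/
def NegNet {V : Type*} [NormedAddCommGroup V] (x : ℝ → V) : Prop :=
  ∀ m : ℕ, SmallE fun ε => ‖x ε‖ ≤ ε ^ (m : ℝ)

/-- A fast scale infinitesimal net. -/
def FastInf {V : Type*} [NormedAddCommGroup V] (x : ℝ → V) : Prop :=
  ∃ a : ℝ, 0 < a ∧ SmallE fun ε => ‖x ε‖ ≤ ε ^ a

/-- A slow scale infinitesimal net of positive reals. -/
def SlowInfPos (r : ℝ → ℝ) : Prop :=
  (∀ ε : ℝ, 0 < ε → ε ≤ 1 → 0 < r ε) ∧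
    ∀ a : ℝ, 0 < a → SmallE fun ε => ε ^ a ≤ r ε ∧ r ε ≤ a

/-- A fast scale net. -/
def FastScale {V : Type*} [NormedAddCommGroup V] (x : ℝ → V) : Prop :=
  ∃ a : ℝ, 0 < a ∧ SmallE fun ε => ε ^ (-a) ≤ ‖x ε‖

/-- A slow scale net. -/
def SlowScale {V : Type*} [NormedAddCommGroup V] (x : ℝ → V) : Prop :=
  ∀ a : ℝ, 0 < a → SmallE fun ε => ‖x ε‖ ≤ ε ^ (-a)

/-- A slow scale net of positive reals. -/
def SlowScalePos (R : ℝ → ℝ) : Prop :=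
  (∀ ε : ℝ, 0 < ε → ε ≤ 1 → 0 < R ε) ∧
    ∀ a : ℝ, 0 < a → SmallE fun ε => R ε ≤ ε ^ (-a)

/-- First order partial derivative in the `i`-th coordinate direction. -/
def pd {d : ℕ} {F : Type*} [NormedAddCommGroup F] [NormedSpace ℝ F]
    (i : Fin d) (f : Eu d → F) : Eu d → F :=
  fun x => fderiv ℝ f x (EuclideanSpace.single i 1)

/-- Iterated partial derivative `∂^α` along a list of coordinate directions
(a multi-index `α`). -/
def pdL {d : ℕ} {F : Type*} [NormedAddCommGroup F] [NormedSpace ℝ F]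
    (L : List (Fin d)) (f : Eu d → F) : Eu d → F :=
  L.foldr pd f

/-- A moderate net of smooth functions on an open set `Ω`. -/
def SmoothModNetOn {d : ℕ} (Ω : Set (Eu d)) (u : ℝ → Eu d → ℂ) : Prop :=
  (∀ ε : ℝ, 0 < ε → ε ≤ 1 → ContDiffOn ℝ (⊤ : ℕ∞) (u ε) Ω) ∧
    ∀ K : Set (Eu d), IsCompact K → K ⊆ Ω → ∀ L : List (Fin d), ∃ N : ℕ,
      SmallE fun ε => ∀ x ∈ K, ‖pdL L (u ε) x‖ ≤ ε ^ (-(N : ℝ))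

/-- A moderate net of smooth functions with supports all contained in one
common compact subset of `Ω`. -/
def CptModNet {d : ℕ} (Ω : Set (Eu d)) (v : ℝ → Eu d → ℂ) : Prop :=
  (∀ ε : ℝ, 0 < ε → ε ≤ 1 → ContDiff ℝ (⊤ : ℕ∞) (v ε)) ∧
  (∃ K : Set (Eu d), IsCompact K ∧ K ⊆ Ω ∧
    ∀ ε : ℝ, 0 < ε → ε ≤ 1 → tsupport (v ε) ⊆ K) ∧
  (∀ L : List (Fin d), ∃ N : ℕ, SmallE fun ε =>
    ∀ x : Eu d, ‖pdL L (v ε) x‖ ≤ ε ^ (-(N : ℝ)))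

/-- The Fourier transform `∫ e^{-i x·ξ} w(x) dx`. -/
def FT {d : ℕ} (w : Eu d → ℂ) (ξ : Eu d) : ℂ :=
  ∫ x : Eu d, Complex.exp (-(Complex.I * ((⟪x, ξ⟫ : ℝ) : ℂ))) * w x

/-- The net `(u_ε)` is microlocally regular at the generalized point `(x₀, ξ₀)`. -/
def MicroReg {d : ℕ} (Ω : Set (Eu d)) (u : ℝ → Eu d → ℂ) (x₀ ξ₀ : ℝ → Eu d) : Prop :=
  ∃ v : ℝ → Eu d → ℂ, CptModNet Ω v ∧
    (∀ m : ℕ, 1 ≤ m → SmallE fun ε => ∀ x : Eu d,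
      ‖x - x₀ ε‖ ≤ ε ^ (1 / (m : ℝ)) → ‖u ε x - v ε x‖ ≤ ε ^ (m : ℝ)) ∧
    (∀ m : ℕ, 1 ≤ m → SmallE fun ε => ∀ ξ : Eu d,
      ε ^ (-(1 / (m : ℝ))) ≤ ‖ξ‖ → ‖‖ξ‖⁻¹ • ξ - ξ₀ ε‖ ≤ ε ^ (1 / (m : ℝ)) →
        ‖FT (v ε) ξ‖ ≤ ε ^ (m : ℝ))

/-- The "japanese bracket" `⟨ξ⟩ = (1+|ξ|²)^{1/2}`. -/
def jap {d : ℕ} (ξ : Eu d) : ℝ := Real.sqrt (1 + ‖ξ‖ ^ 2)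

/-- An S-moderate net of Schwartz functions. -/
def SModNet {d : ℕ} (v : ℝ → SchwartzMap (Eu d) ℂ) : Prop :=
  ∀ (L : List (Fin d)) (β : Fin d → ℕ), ∃ N : ℕ, SmallE fun ε =>
    ∀ x : Eu d, |∏ j, (x j) ^ (β j)| * ‖pdL L (⇑(v ε)) x‖ ≤ ε ^ (-(N : ℝ))


/-! (3) ⇒ (2) is immediate, and (3) ⇒ (1) follows by letting `m` grow with `ε`: a diagonal
argument produces levels `μ ε → ∞` such that, for every multi-index, the bound on the ball of
radius `ε ^ (1 / μ ε)` holds for small `ε`, and half that radius is a slow scale infinitesimal.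
Conversely, if (3) fails, then for every `N` there are arbitrarily small `ε` and points `y` close
to `x₀ ε` with `|∂^α u_ε(y)| > ε ^ (-(N + 1))` for a fixed `α = α_N`. Gluing these points into one
net, in such a way that every `N` recurs along a sequence `εₖ → 0`, produces a moderate net near
`x₀` violating (1), respectively (2). -/

open Filter Topology

theorem smallE_iff {P : ℝ → Prop} : SmallE P ↔ ∀ᶠ ε in 𝓝[>] 0, P ε := by
  simp only [SmallE, (nhdsGT_basis_Ioc (0 : ℝ)).eventually_iff, mem_Ioc, and_imp]

theorem eventually_nhdsGT_zero_le {c : ℝ} (hc : 0 < c) : ∀ᶠ ε in 𝓝[>] (0 : ℝ), ε ≤ c :=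
  (eventually_le_nhds hc).filter_mono nhdsWithin_le_nhds

theorem eventually_nhdsGT_zero_rpow_lt {a c : ℝ} (ha : 0 < a) (hc : 0 < c) :
    ∀ᶠ ε in 𝓝[>] (0 : ℝ), ε ^ a < c := by
  have h : Tendsto (fun ε : ℝ => ε ^ a) (𝓝 0) (𝓝 0) := by
    simpa [Real.zero_rpow ha.ne'] using (Real.continuousAt_rpow_const 0 a (Or.inr ha.le)).tendsto
  exact (h.mono_left nhdsWithin_le_nhds).eventually (gt_mem_nhds hc)

theorem one_le_rpow_neg_natCast {ε : ℝ} (hε : 0 < ε) (hε1 : ε ≤ 1) (N : ℕ) :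
    1 ≤ ε ^ (-(N : ℝ)) :=
  Real.one_le_rpow_of_pos_of_le_one_of_nonpos hε hε1 (by simp)

theorem rpow_neg_add_le_rpow_neg_succ {ε c : ℝ} {N : ℕ} (hε : 0 < ε) (hε2 : ε ≤ 2⁻¹)
    (hc : c ≤ ε ^ (-(N : ℝ))) : ε ^ (-(N : ℝ)) + c ≤ ε ^ (-((N + 1 : ℕ) : ℝ)) := by
  have h2 : 2 ≤ ε⁻¹ := le_inv_of_le_inv₀ hε hε2
  have hsucc : ε ^ (-((N + 1 : ℕ) : ℝ)) = ε ^ (-(N : ℝ)) * ε⁻¹ := by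
    rw [← Real.rpow_neg_one, ← Real.rpow_add hε]
    push_cast
    ring_nf
  rw [hsucc]
  nlinarith [Real.rpow_pos_of_pos hε (-(N : ℝ))]

theorem NegNet.eventually_le {n : ℝ → ℝ} (hn : NegNet n) : ∀ᶠ ε in 𝓝[>] 0, n ε ≤ ε := by
  filter_upwards [smallE_iff.1 (hn 1)] with ε hε
  simpa using (le_abs_self (n ε)).trans hε

theorem negNet_zero {V : Type*} [NormedAddCommGroup V] : NegNet fun _ : ℝ => (0 : V) :=
  fun m => ⟨1, one_pos, fun ε hε _ => by simpa using (Real.rpow_pos_of_pos hε (m : ℝ)).le⟩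

theorem NegNet.not_smallE_le_rpow_neg_add {n g : ℝ → ℝ} (hn : NegNet n) {N : ℕ}
    (hg : ∃ᶠ ε in 𝓝[>] 0, ε ^ (-((N + 1 : ℕ) : ℝ)) < g ε) :
    ¬ SmallE fun ε => g ε ≤ ε ^ (-(N : ℝ)) + n ε := by
  intro h
  obtain ⟨ε, hlt, hle, hnε, hε2, hε⟩ := (hg.and_eventually ((smallE_iff.1 h).and
    (hn.eventually_le.and ((eventually_nhdsGT_zero_le (by norm_num : (0 : ℝ) < 2⁻¹)).and
      self_mem_nhdsWithin)))).exists
  have hε1 : ε ≤ 1 := hε2.trans (by norm_num)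
  have hnN : n ε ≤ ε ^ (-(N : ℝ)) := (hnε.trans hε1).trans (one_le_rpow_neg_natCast hε hε1 N)
  linarith [rpow_neg_add_le_rpow_neg_succ hε hε2 hnN]

section ModNet

variable {E : Type*} [NormedAddCommGroup E]

theorem modNet_of_eventually_norm_le {x : ℝ → E} (C : ℝ) (h : ∀ᶠ ε in 𝓝[>] 0, ‖x ε‖ ≤ C) :
    ModNet x := by
  refine ⟨1, smallE_iff.2 ?_⟩
  filter_upwards [h, tendsto_inv_nhdsGT_zero.eventually_ge_atTop C] with ε hx hC
  simpa [Real.rpow_neg_one] using hx.trans hC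

theorem ModNet.add {x y : ℝ → E} (hx : ModNet x) (hy : ModNet y) : ModNet (x + y) := by
  obtain ⟨N, hN⟩ := hx
  obtain ⟨M, hM⟩ := hy
  have hmono : ∀ {ε : ℝ} {k : ℕ}, 0 < ε → ε ≤ 1 → k ≤ max N M →
      ε ^ (-(k : ℝ)) ≤ ε ^ (-(max N M : ℕ) : ℝ) := fun hε hε1 hk =>
    Real.rpow_le_rpow_of_exponent_ge hε hε1 (neg_le_neg (Nat.cast_le.2 hk))
  refine ⟨max N M + 1, smallE_iff.2 ?_⟩
  filter_upwards [smallE_iff.1 hN, smallE_iff.1 hM,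
    eventually_nhdsGT_zero_le (by norm_num : (0 : ℝ) < 2⁻¹), self_mem_nhdsWithin]
    with ε hxε hyε hε2 hε
  have hε1 : ε ≤ 1 := hε2.trans (by norm_num)
  calc ‖(x + y) ε‖ ≤ ‖x ε‖ + ‖y ε‖ := norm_add_le _ _
    _ ≤ ε ^ (-(max N M : ℕ) : ℝ) + ε ^ (-(max N M : ℕ) : ℝ) :=
      add_le_add (hxε.trans (hmono hε hε1 (le_max_left _ _)))
        (hyε.trans (hmono hε hε1 (le_max_right _ _)))
    _ ≤ _ := rpow_neg_add_le_rpow_neg_succ hε hε2 le_rfl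

theorem ModNet.of_eventually_norm_sub_le {x y : ℝ → E} (hy : ModNet y) (C : ℝ)
    (h : ∀ᶠ ε in 𝓝[>] 0, ‖x ε - y ε‖ ≤ C) : ModNet x := by
  convert (modNet_of_eventually_norm_le C h).add hy using 1
  ext ε
  simp

end ModNet

theorem exists_strictAnti_forall_of_frequently {B : ℕ → ℝ → Prop}
    (hB : ∀ k, ∃ᶠ ε in 𝓝[>] 0, B k ε) :
    ∃ e : ℕ → ℝ, StrictAnti e ∧ Tendsto e atTop (𝓝[>] 0) ∧ ∀ k, B k (e k) := by
  choose! pick hpick using fun k (δ : ℝ) (hδ : 0 < δ) =>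
    ((hB k).and_eventually (Ioo_mem_nhdsGT hδ)).exists
  let e : ℕ → ℝ := fun k =>
    Nat.rec (pick 0 1) (fun k ek => pick (k + 1) (min ek ((k : ℝ) + 2)⁻¹)) k
  have hstep : ∀ k, 0 < e k → B (k + 1) (e (k + 1)) ∧ 0 < e (k + 1) ∧
      e (k + 1) < min (e k) ((k : ℝ) + 2)⁻¹ :=
    fun k hk => hpick (k + 1) _ (lt_min hk (by positivity))
  have he : ∀ k, B k (e k) ∧ 0 < e k ∧ e k < ((k : ℝ) + 1)⁻¹ := by
    intro k
    induction k with
    | zero => simpa [e] using hpick 0 1 one_pos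
    | succ k ih =>
      obtain ⟨hBk, hpos, hlt⟩ := hstep k ih.2.1
      refine ⟨hBk, hpos, hlt.trans_le ?_⟩
      rw [Nat.cast_succ, add_assoc, one_add_one_eq_two]
      exact min_le_right _ _
  refine ⟨e, strictAnti_nat_of_succ_lt fun k => ?_, ?_, fun k => (he k).1⟩
  · exact (hstep k (he k).2.1).2.2.trans_le (min_le_left _ _)
  · refine tendsto_nhdsWithin_iff.2 ⟨?_, Eventually.of_forall fun k => (he k).2.1⟩
    exact squeeze_zero (fun k => (he k).2.1.le) (fun k => (he k).2.2.le)
      (by simpa only [one_div] using tendsto_one_div_add_atTop_nhds_zero_nat (𝕜 := ℝ))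

/-- The points are taken at the terms of one strictly decreasing sequence `εₖ → 0`, serving
the condition `n = (Nat.unpair k).1` at `εₖ`, so that every `n` recurs. -/
theorem exists_net_forall_frequently {E : Type*} {P : ℕ → ℝ → E → Prop}
    (hP : ∀ n, ∃ᶠ ε in 𝓝[>] 0, ∃ y, P n ε y) (x₀ : ℝ → E) :
    ∃ x : ℝ → E, (∀ ε, x ε = x₀ ε ∨ ∃ n, P n ε (x ε)) ∧ ∀ n, ∃ᶠ ε in 𝓝[>] 0, P n ε (x ε) := by
  classical
  obtain ⟨e, he_anti, he_lim, he⟩ :=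
    exists_strictAnti_forall_of_frequently fun k => hP (Nat.unpair k).1
  let index : ℝ → ℕ := fun ε => (Nat.unpair (Function.invFun e ε)).1
  have hindex : ∀ k, index (e k) = (Nat.unpair k).1 := fun k => by
    simp only [index, Function.leftInverse_invFun he_anti.injective k]
  let x : ℝ → E := fun ε => if h : ∃ y, P (index ε) ε y then h.choose else x₀ ε
  have hx : ∀ ε, (∃ y, P (index ε) ε y) → P (index ε) ε (x ε) := fun ε h => by
    simpa only [x, dif_pos h] using h.choose_spec
  have hxe : ∀ k, P (Nat.unpair k).1 (e k) (x (e k)) := fun k => by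
    simpa only [hindex] using hx (e k) (by simpa only [hindex] using he k)
  refine ⟨x, fun ε => ?_, fun n => frequently_iff_seq_forall.2
    ⟨fun j => e (Nat.pair n j), ?_, fun j => by simpa using hxe (Nat.pair n j)⟩⟩
  · by_cases h : ∃ y, P (index ε) ε y
    · exact Or.inr ⟨index ε, hx ε h⟩
    · exact Or.inl (dif_neg h)
  · exact he_lim.comp (tendsto_atTop_mono (Nat.right_le_pair n) tendsto_id)

theorem exists_tendsto_atTop_forall_eventually {α ι : Type*} [Countable ι] {l : Filter α}
    {B : α → ℕ} (hB : Tendsto B l atTop) {P : ℕ → ι → α → Prop}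
    (hP : ∀ n i, ∀ᶠ a in l, P n i a) :
    ∃ μ : α → ℕ, Tendsto μ l atTop ∧ ∀ i, ∀ᶠ a in l, P (μ a) i a := by
  classical
  have := Encodable.ofCountable ι
  let Q : ℕ → α → Prop := fun n a => ∀ i, Encodable.encode i ≤ n → P n i a
  have hQ : ∀ n, ∀ᶠ a in l, Q n a := fun n =>
    (eventually_all_finite ((Set.finite_Iic n).preimage
      Encodable.encode_injective.injOn)).2 fun i _ => hP n i
  let μ : α → ℕ := fun a => Nat.findGreatest (Q · a) (B a)
  have hμ : Tendsto μ l atTop := tendsto_atTop.2 fun n => by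
    filter_upwards [hQ n, hB.eventually_ge_atTop n] with a hQa hBa
    exact Nat.le_findGreatest hBa hQa
  refine ⟨μ, hμ, fun i => ?_⟩
  filter_upwards [hQ 0, hμ.eventually_ge_atTop (Encodable.encode i)] with a hQ0 hi
  exact Nat.findGreatest_spec (P := (Q · a)) (Nat.zero_le _) hQ0 i hi

theorem slowInfPos_rpow_div_two {s : ℝ → ℝ} (hs : Tendsto s (𝓝[>] 0) (𝓝 0))
    (hρ : Tendsto (fun ε => ε ^ s ε) (𝓝[>] 0) (𝓝 0)) :
    SlowInfPos fun ε => ε ^ s ε / 2 := by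
  refine ⟨fun ε hε _ => half_pos (Real.rpow_pos_of_pos hε _), fun a ha => smallE_iff.2 ?_⟩
  filter_upwards [hs.eventually (ge_mem_nhds (half_pos ha)), hρ.eventually (gt_mem_nhds ha),
    eventually_nhdsGT_zero_rpow_lt (half_pos ha) (by norm_num : (0 : ℝ) < 2⁻¹),
    eventually_nhdsGT_zero_le one_pos, self_mem_nhdsWithin] with ε hsε hρε hhalf hε1 hε
  have hρ0 : 0 ≤ ε ^ s ε := (Real.rpow_pos_of_pos hε _).le
  refine ⟨?_, by linarith⟩
  calc ε ^ a = ε ^ (a / 2) * ε ^ (a / 2) := by rw [← Real.rpow_add hε, add_halves]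
    _ ≤ 2⁻¹ * ε ^ s ε := mul_le_mul hhalf.le (Real.rpow_le_rpow_of_exponent_ge hε hε1 hsε)
        (Real.rpow_pos_of_pos hε _).le (by norm_num)
    _ = ε ^ s ε / 2 := by ring

section Bounds

variable {E ι : Type*} [NormedAddCommGroup E]

-- In conditions (1)–(3) below, `f i ε y` plays the role of `|∂^α u_ε(y)|` for the multi-index `i`.

def BoundOnSlowNbhd (f : ι → ℝ → E → ℝ) (x₀ : ℝ → E) : Prop :=
  ∃ r : ℝ → ℝ, SlowInfPos r ∧ ∀ x : ℝ → E, ModNet x →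
    (∃ n : ℝ → ℝ, NegNet n ∧ SmallE fun ε => ‖x ε - x₀ ε‖ ≤ r ε + n ε) →
    ∃ N : ℕ, ∀ i, ∃ n' : ℝ → ℝ, NegNet n' ∧
      SmallE fun ε => f i ε (x ε) ≤ ε ^ (-(N : ℝ)) + n' ε

def BoundOnFastNbhd (f : ι → ℝ → E → ℝ) (x₀ : ℝ → E) : Prop :=
  ∃ N : ℕ, ∀ i, ∀ x : ℝ → E, ModNet x → FastInf (fun ε => x ε - x₀ ε) →
    ∃ n' : ℝ → ℝ, NegNet n' ∧ SmallE fun ε => f i ε (x ε) ≤ ε ^ (-(N : ℝ)) + n' ε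

def BoundOnBalls (f : ι → ℝ → E → ℝ) (x₀ : ℝ → E) : Prop :=
  ∃ N : ℕ, ∀ m : ℕ, 1 ≤ m → ∀ i, SmallE fun ε =>
    ∀ y : E, ‖y - x₀ ε‖ ≤ ε ^ (1 / (m : ℝ)) → f i ε y ≤ ε ^ (-(N : ℝ))

variable {f : ι → ℝ → E → ℝ} {x₀ : ℝ → E}

theorem frequently_of_not_boundOnBalls (h : ¬ BoundOnBalls f x₀) (N : ℕ) :
    ∃ m : ℕ, 1 ≤ m ∧ ∃ i, ∃ᶠ ε in 𝓝[>] 0,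
      ∃ y, ‖y - x₀ ε‖ ≤ ε ^ (1 / (m : ℝ)) ∧ ε ^ (-(N : ℝ)) < f i ε y := by
  by_contra! hc
  refine h ⟨N, fun m hm i => smallE_iff.2 ?_⟩
  filter_upwards [hc m hm i] with ε hε y hy
  exact hε y hy

theorem boundOnFastNbhd_of_boundOnBalls (h : BoundOnBalls f x₀) : BoundOnFastNbhd f x₀ := by
  obtain ⟨N, hN⟩ := h
  refine ⟨N, fun i x _ ⟨a, ha, hxa⟩ => ⟨fun _ => 0, negNet_zero, ?_⟩⟩
  obtain ⟨m, hm⟩ := exists_nat_one_div_lt ha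
  refine smallE_iff.2 ?_
  filter_upwards [smallE_iff.1 (hN (m + 1) (Nat.le_add_left 1 m) i), smallE_iff.1 hxa,
    eventually_nhdsGT_zero_le one_pos, self_mem_nhdsWithin] with ε hball hxε hε1 hε
  rw [add_zero]
  refine hball _ (hxε.trans (Real.rpow_le_rpow_of_exponent_ge hε hε1 ?_))
  push_cast
  exact hm.le

theorem boundOnBalls_of_boundOnFastNbhd (hx₀ : ModNet x₀) (h : BoundOnFastNbhd f x₀) :
    BoundOnBalls f x₀ := by
  by_contra h3
  obtain ⟨N, hN⟩ := h
  obtain ⟨m, hm, i, hbad⟩ := frequently_of_not_boundOnBalls h3 (N + 1)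
  obtain ⟨x, hx, hxbad⟩ := exists_net_forall_frequently (fun _ => hbad) x₀
  have hclose : ∀ ε, 0 < ε → ‖x ε - x₀ ε‖ ≤ ε ^ (1 / (m : ℝ)) := fun ε hε => by
    rcases hx ε with h | ⟨_, h, _⟩
    · simpa [h] using (Real.rpow_pos_of_pos hε _).le
    · exact h
  have hmod : ModNet x := hx₀.of_eventually_norm_sub_le 1 <| by
    filter_upwards [eventually_nhdsGT_zero_le one_pos, self_mem_nhdsWithin] with ε hε1 hε
    exact (hclose ε hε).trans (Real.rpow_le_one hε.le hε1 (by positivity))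
  have hfast : FastInf fun ε => x ε - x₀ ε :=
    ⟨1 / m, by positivity, 1, one_pos, fun ε hε _ => hclose ε hε⟩
  obtain ⟨n', hn', hbound⟩ := hN i x hmod hfast
  exact hn'.not_smallE_le_rpow_neg_add ((hxbad 0).mono fun _ h => h.2) hbound

theorem boundOnBalls_of_boundOnSlowNbhd (hx₀ : ModNet x₀) (h : BoundOnSlowNbhd f x₀) :
    BoundOnBalls f x₀ := by
  by_contra h3
  obtain ⟨r, ⟨hr_pos, hr_slow⟩, hr⟩ := h
  choose m hm i hbad using frequently_of_not_boundOnBalls h3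
  have hbad_r : ∀ N, ∃ᶠ ε in 𝓝[>] 0,
      ∃ y, ‖y - x₀ ε‖ ≤ r ε ∧ ε ^ (-((N + 1 : ℕ) : ℝ)) < f (i (N + 1)) ε y := fun N => by
    have hm_pos : (0 : ℝ) < 1 / m (N + 1) := by have := hm (N + 1); positivity
    refine (hbad (N + 1)).mp ?_
    filter_upwards [smallE_iff.1 (hr_slow _ hm_pos)] with ε hrε ⟨y, hy, hfy⟩
    exact ⟨y, hy.trans hrε.1, hfy⟩
  obtain ⟨x, hx, hxbad⟩ := exists_net_forall_frequently hbad_r x₀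
  have hclose : ∀ ε, 0 < ε → ε ≤ 1 → ‖x ε - x₀ ε‖ ≤ r ε := fun ε hε hε1 => by
    rcases hx ε with h | ⟨_, h, _⟩
    · simpa [h] using (hr_pos ε hε hε1).le
    · exact h
  have hmod : ModNet x := hx₀.of_eventually_norm_sub_le 1 <| by
    filter_upwards [eventually_nhdsGT_zero_le one_pos, self_mem_nhdsWithin,
      smallE_iff.1 (hr_slow 1 one_pos)] with ε hε1 hε hrε
    exact (hclose ε hε hε1).trans hrε.2
  obtain ⟨N, hN⟩ := hr x hmod ⟨fun _ => 0, negNet_zero, 1, one_pos, fun ε hε hε1 => by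
    simpa using hclose ε hε hε1⟩
  obtain ⟨n', hn', hbound⟩ := hN (i (N + 1))
  exact hn'.not_smallE_le_rpow_neg_add ((hxbad N).mono fun _ h => h.2) hbound

theorem boundOnSlowNbhd_of_boundOnBalls [Countable ι] (h : BoundOnBalls f x₀) :
    BoundOnSlowNbhd f x₀ := by
  obtain ⟨N, hN⟩ := h
  -- The index `none` asks for `ε ^ (1 / m) ≤ 1 / m`, which makes the radius tend to zero.
  let P : ℕ → Option ι → ℝ → Prop := fun m o ε => 0 < m →
    o.elim (ε ^ (1 / (m : ℝ)) ≤ 1 / m)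
      fun i => ∀ y, ‖y - x₀ ε‖ ≤ ε ^ (1 / (m : ℝ)) → f i ε y ≤ ε ^ (-(N : ℝ))
  have hP : ∀ m o, ∀ᶠ ε in 𝓝[>] 0, P m o ε := by
    rintro (_ | m) o
    · exact Eventually.of_forall fun _ h => absurd h (lt_irrefl 0)
    · have hm : (0 : ℝ) < 1 / (m + 1 : ℕ) := by positivity
      cases o with
      | none => exact (eventually_nhdsGT_zero_rpow_lt hm hm).mono fun _ h _ => h.le
      | some i =>
        exact (smallE_iff.1 (hN (m + 1) (Nat.le_add_left 1 m) i)).mono fun _ h _ => h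
  obtain ⟨μ, hμ, hμP⟩ := exists_tendsto_atTop_forall_eventually
    (tendsto_nat_floor_atTop.comp tendsto_inv_nhdsGT_zero) hP
  have hμ_pos : ∀ᶠ ε in 𝓝[>] 0, 0 < μ ε := hμ.eventually_gt_atTop 0
  have hs : Tendsto (fun ε => 1 / (μ ε : ℝ)) (𝓝[>] 0) (𝓝 0) :=
    (tendsto_one_div_atTop_nhds_zero_nat (𝕜 := ℝ)).comp hμ
  have hρ : Tendsto (fun ε => ε ^ (1 / (μ ε : ℝ))) (𝓝[>] 0) (𝓝 0) := by
    refine squeeze_zero' ?_ ?_ hs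
    · filter_upwards [self_mem_nhdsWithin] with ε hε using (Real.rpow_pos_of_pos hε _).le
    · filter_upwards [hμP none, hμ_pos] with ε h hpos using h hpos
  have hr := slowInfPos_rpow_div_two hs hρ
  refine ⟨_, hr, fun x _ ⟨n, hn, hxn⟩ => ⟨N, fun i => ⟨fun _ => 0, negNet_zero, ?_⟩⟩⟩
  refine smallE_iff.2 ?_
  filter_upwards [hμP (some i), hμ_pos, smallE_iff.1 hxn, hn.eventually_le,
    smallE_iff.1 (hr.2 1 one_pos)] with ε hball hpos hxε hnε hrε
  rw [add_zero]
  refine hball hpos _ ?_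
  rw [Real.rpow_one] at hrε
  linarith [hrε.1]

end Bounds

theorem stmt11_general {d : ℕ} (K : Set (Eu d)) (hK : IsCompact K)
    (x₀ : ℝ → Eu d) (hx₀ : ∀ ε : ℝ, 0 < ε → ε ≤ 1 → x₀ ε ∈ K)
    (u : ℝ → Eu d → ℂ) :
    [ -- (1) G^∞-bounds on a slow scale neighbourhood of x₀
      (∃ r : ℝ → ℝ, SlowInfPos r ∧ ∀ x : ℝ → Eu d, ModNet x →
        (∃ n : ℝ → ℝ, NegNet n ∧ SmallE fun ε => ‖x ε - x₀ ε‖ ≤ r ε + n ε) →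
        ∃ N : ℕ, ∀ L : List (Fin d), ∃ n' : ℝ → ℝ, NegNet n' ∧
          SmallE fun ε => ‖pdL L (u ε) (x ε)‖ ≤ ε ^ (-(N : ℝ)) + n' ε),
      -- (2) uniform G^∞-bounds at all points fast-scale close to x₀
      (∃ N : ℕ, ∀ L : List (Fin d), ∀ x : ℝ → Eu d, ModNet x →
        FastInf (fun ε => x ε - x₀ ε) →
        ∃ n' : ℝ → ℝ, NegNet n' ∧
          SmallE fun ε => ‖pdL L (u ε) (x ε)‖ ≤ ε ^ (-(N : ℝ)) + n' ε),
      -- (3) sup estimates on balls of radius ε^{1/m}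
      (∃ N : ℕ, ∀ m : ℕ, 1 ≤ m → ∀ L : List (Fin d), SmallE fun ε =>
        ∀ x : Eu d, ‖x - x₀ ε‖ ≤ ε ^ (1 / (m : ℝ)) →
          ‖pdL L (u ε) x‖ ≤ ε ^ (-(N : ℝ))) ].TFAE := by
  let f : List (Fin d) → ℝ → Eu d → ℝ := fun L ε y => ‖pdL L (u ε) y‖
  have hx₀_mod : ModNet x₀ := by
    obtain ⟨C, hC⟩ := hK.isBounded.exists_norm_le
    refine modNet_of_eventually_norm_le C ?_
    filter_upwards [self_mem_nhdsWithin, eventually_nhdsGT_zero_le one_pos] with ε hε hε1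
    exact hC _ (hx₀ ε hε hε1)
  tfae_have 1 → 3 := boundOnBalls_of_boundOnSlowNbhd (f := f) hx₀_mod
  tfae_have 3 → 1 := boundOnSlowNbhd_of_boundOnBalls (f := f)
  tfae_have 3 → 2 := boundOnFastNbhd_of_boundOnBalls (f := f)
  tfae_have 2 → 3 := boundOnBalls_of_boundOnFastNbhd (f := f) hx₀_mod
  tfae_finish

/-- Proposition 4.6: pointwise characterizations of
`G^∞`-regularity on a slow scale neighbourhood of a generalized point. -/
theorem stmt11 {d : ℕ} (Ω K : Set (Eu d)) (hΩ : IsOpen Ω) (hK : IsCompact K)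
    (hKΩ : K ⊆ Ω) (x₀ : ℝ → Eu d) (hx₀ : ∀ ε : ℝ, 0 < ε → ε ≤ 1 → x₀ ε ∈ K)
    (u : ℝ → Eu d → ℂ) (hu : SmoothModNetOn Ω u) :
    [ -- (1) G^∞-bounds on a slow scale neighbourhood of x₀
      (∃ r : ℝ → ℝ, SlowInfPos r ∧ ∀ x : ℝ → Eu d, ModNet x →
        (∃ n : ℝ → ℝ, NegNet n ∧ SmallE fun ε => ‖x ε - x₀ ε‖ ≤ r ε + n ε) →
        ∃ N : ℕ, ∀ L : List (Fin d), ∃ n' : ℝ → ℝ, NegNet n' ∧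
          SmallE fun ε => ‖pdL L (u ε) (x ε)‖ ≤ ε ^ (-(N : ℝ)) + n' ε),
      -- (2) uniform G^∞-bounds at all points fast-scale close to x₀
      (∃ N : ℕ, ∀ L : List (Fin d), ∀ x : ℝ → Eu d, ModNet x →
        FastInf (fun ε => x ε - x₀ ε) →
        ∃ n' : ℝ → ℝ, NegNet n' ∧
          SmallE fun ε => ‖pdL L (u ε) (x ε)‖ ≤ ε ^ (-(N : ℝ)) + n' ε),
      -- (3) sup estimates on balls of radius ε^{1/m}
      (∃ N : ℕ, ∀ m : ℕ, 1 ≤ m → ∀ L : List (Fin d), SmallE fun ε =>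
        ∀ x : Eu d, ‖x - x₀ ε‖ ≤ ε ^ (1 / (m : ℝ)) →
          ‖pdL L (u ε) x‖ ≤ ε ^ (-(N : ℝ))) ].TFAE :=
  stmt11_general K hK x₀ hx₀ u
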